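/- For every natural number n ≥ 10, the real number p = 1 + 1/(2n²) + (1/n)·√(1 + 1/(4n²)) satisfies 2 ≤ p^{n-1} ≤ 8. -/
import Mathlib

/-- Quadratic Bernoulli inequality. -/
lemma quad_bernoulli (x : ℝ) (hx : 0 ≤ x) :
    ∀ m : ℕ, 1 + (m : ℝ) * x + ((m : ℝ) * ((m : ℝ) - 1) / 2) * x ^ 2 ≤ (1 + x) ^ m := by
  intro m
  induction m with
  | zero => norm_num
  | succ k ih =>
    have h1 : (1 + x) ^ (k + 1) = (1 + x) ^ k * (1 + x) := by ring
    have h2 : (0:ℝ) ≤ 1 + x := by linarith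
    have hk : (0:ℝ) ≤ (k:ℝ) * ((k:ℝ) - 1) := by
      rcases Nat.eq_zero_or_pos k with h | h
      · simp [h]
      · have : (1:ℝ) ≤ (k:ℝ) := by exact_mod_cast h
        nlinarith
    have h3 : (0:ℝ) ≤ ((k:ℝ) * ((k:ℝ) - 1) / 2) * x ^ 3 :=
      mul_nonneg (by linarith) (pow_nonneg hx 3)
    push_cast
    rw [h1]
    nlinarith [mul_le_mul_of_nonneg_right ih h2]

/-- for `n ≥ 10`,
`p = 1 + 1/(2n²) + (1/n)·√(1 + 1/(4n²))` satisfies `2 ≤ p^(n-1) ≤ 8`. -/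
theorem stmt_3 (n : ℕ) (hn : 10 ≤ n) (p : ℝ)
    (hp : p = 1 + 1 / (2 * (n : ℝ) ^ 2)
      + (1 / (n : ℝ)) * Real.sqrt (1 + 1 / (4 * (n : ℝ) ^ 2))) :
    2 ≤ p ^ (n - 1) ∧ p ^ (n - 1) ≤ 8 := by
  have hn10 : (10:ℝ) ≤ (n:ℝ) := by exact_mod_cast hn
  have hnpos : (0:ℝ) < (n:ℝ) := by linarith
  have hm : ((n - 1 : ℕ) : ℝ) = (n:ℝ) - 1 := by
    have : 1 ≤ n := by omega
    push_cast [this]; ring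
  have hs_nonneg : (0:ℝ) ≤ 1 + 1 / (4 * (n : ℝ) ^ 2) := by positivity
  have hsq := Real.sq_sqrt hs_nonneg
  have hsn := Real.sqrt_nonneg (1 + 1 / (4 * (n : ℝ) ^ 2))
  have hden : (0:ℝ) < 1 / (4 * (n:ℝ)^2) := by positivity
  -- sqrt bounds
  have hs_lb : (1:ℝ) ≤ Real.sqrt (1 + 1 / (4 * (n : ℝ) ^ 2)) := by
    nlinarith [hsq, hsn, hden]
  have hs_ub : Real.sqrt (1 + 1 / (4 * (n : ℝ) ^ 2)) ≤ 1 + 1 / (8 * (n:ℝ)^2) := by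
    have e : (1 + 1 / (8 * (n:ℝ)^2))^2 = 1 + 1 / (4 * (n:ℝ)^2) + 1 / (64 * (n:ℝ)^4) := by
      field_simp; ring
    have hpos : (0:ℝ) < 1 / (64 * (n:ℝ)^4) := by positivity
    have h := Real.sqrt_le_sqrt (show 1 + 1 / (4 * (n : ℝ) ^ 2) ≤ (1 + 1 / (8 * (n:ℝ)^2))^2 by
      rw [e]; linarith)
    rwa [Real.sqrt_sq (by positivity)] at h
  -- p bounds
  have hp_lb : 1 + 1 / (n:ℝ) ≤ p := by
    rw [hp]
    have h1 : (0:ℝ) ≤ 1 / (2 * (n:ℝ)^2) := by positivity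
    have h2 : 1 / (n:ℝ) * 1 ≤ 1 / (n:ℝ) * Real.sqrt (1 + 1 / (4 * (n : ℝ) ^ 2)) := by
      apply mul_le_mul_of_nonneg_left hs_lb; positivity
    linarith
  have hp_ub : p ≤ 1 + 11 / (10 * (n:ℝ)) := by
    rw [hp]
    have h2 : 1 / (n:ℝ) * Real.sqrt (1 + 1 / (4 * (n : ℝ) ^ 2)) ≤ 1 / (n:ℝ) * (1 + 1 / (8 * (n:ℝ)^2)) := by
      apply mul_le_mul_of_nonneg_left hs_ub; positivity
    have h3 : 1 / (2 * (n:ℝ)^2) + 1 / (n:ℝ) * (1 + 1 / (8 * (n:ℝ)^2)) ≤ 11 / (10 * (n:ℝ)) := by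
      have e : 1 / (2 * (n:ℝ)^2) + 1 / (n:ℝ) * (1 + 1 / (8 * (n:ℝ)^2))
          = (4 * (n:ℝ) + 8 * (n:ℝ)^2 + 1) / (8 * (n:ℝ)^3) := by
        field_simp; ring
      rw [e, div_le_div_iff₀ (by positivity) (by positivity)]
      nlinarith [mul_le_mul_of_nonneg_left hn10 (le_of_lt (mul_pos hnpos hnpos))]
    linarith
  constructor
  · -- lower bound
    have hb := quad_bernoulli (1 / (n:ℝ)) (by positivity) (n - 1)
    rw [hm] at hb
    have key : (2:ℝ) ≤ 1 + ((n:ℝ) - 1) * (1 / (n:ℝ))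
        + (((n:ℝ) - 1) * (((n:ℝ) - 1) - 1) / 2) * (1 / (n:ℝ)) ^ 2 := by
      have e : 1 + ((n:ℝ) - 1) * (1 / (n:ℝ))
          + (((n:ℝ) - 1) * (((n:ℝ) - 1) - 1) / 2) * (1 / (n:ℝ)) ^ 2
          = (2*(n:ℝ)^2 + 2*(n:ℝ)*((n:ℝ)-1) + ((n:ℝ)-1)*((n:ℝ)-2)) / (2*(n:ℝ)^2) := by
        field_simp; ring
      rw [e, le_div_iff₀ (by positivity)]
      nlinarith [mul_le_mul_of_nonneg_left hn10 (le_of_lt hnpos)]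
    have hstep : (1 + 1 / (n:ℝ)) ^ (n - 1) ≤ p ^ (n - 1) := by
      apply pow_le_pow_left₀ (by positivity) hp_lb
    linarith [key.trans hb]
  · -- upper bound
    have hpe : p ≤ Real.exp (11 / (10 * (n:ℝ))) := by
      have := Real.add_one_le_exp (11 / (10 * (n:ℝ)))
      linarith
    have hp0 : (0:ℝ) ≤ p := by
      have : (0:ℝ) < 1 / (n:ℝ) := by positivity
      linarith
    have h1 : p ^ (n - 1) ≤ Real.exp (11 / (10 * (n:ℝ))) ^ (n - 1) := by
      apply pow_le_pow_left₀ hp0 hpe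
    have h2 : Real.exp (11 / (10 * (n:ℝ))) ^ (n - 1)
        = Real.exp (((n - 1 : ℕ):ℝ) * (11 / (10 * (n:ℝ)))) := by
      rw [← Real.exp_nat_mul]
    have h3 : ((n - 1 : ℕ):ℝ) * (11 / (10 * (n:ℝ))) ≤ 2 := by
      rw [hm, show ((n:ℝ) - 1) * (11 / (10 * (n:ℝ))) = (11 * ((n:ℝ) - 1)) / (10 * (n:ℝ)) by ring,
        div_le_iff₀ (by positivity)]
      linarith
    have h4 := Real.exp_le_exp.mpr h3
    have h5 : Real.exp 2 ≤ 8 := by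
      have he : Real.exp 1 < 2.7182818286 := Real.exp_one_lt_d9
      have h2' : Real.exp 2 = Real.exp 1 * Real.exp 1 := by
        rw [← Real.exp_add]; norm_num
      nlinarith [Real.exp_pos 1]
    calc p ^ (n-1) ≤ Real.exp (11 / (10 * (n:ℝ))) ^ (n - 1) := h1
      _ = Real.exp (((n - 1 : ℕ):ℝ) * (11 / (10 * (n:ℝ)))) := h2
      _ ≤ Real.exp 2 := h4
      _ ≤ 8 := h5
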